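/- arXiv:2308.01418 — 2 statements merged into one kernel-verified Lean document; each statement's English description precedes it below -/
import Mathlib

section
/- For an i.i.d. sequence (A_t, B_t)_{t∈ℤ} with A_t, B_t > 0 and E log A_1 < 0, E log⁺ B_1 < ∞, the stochastic recurrence equation X_t = A_t X_{t−1} + B_t has a unique stationary solution given by X_t = B_t + ∑_{j=−∞}^{t−1} A_t A_{t−1} ⋯ A_{j+1} B_j, where the series converges almost surely. -/
/-!
By the strong law of large numbers, `n⁻¹ ∑_{j<n} log A_{t-j} → E log A₁ < 0` and
`log⁺ B_{t-1-n} = o(n)` almost surely, so the terms of the series decay geometrically. Splitting off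
the first term shows that the series solves the recurrence, and it is stationary because it is a
fixed measurable function of the i.i.d. path, whose law is the shift-invariant product measure.
For uniqueness, iterating the recurrence `n + 1` times writes a solution `Y_t` as a partial sum of
the series plus `A_t ⋯ A_{t-n} Y_{t-1-n}`; the product tends to zero almost surely while
`Y_{t-1-n}` has a fixed law, so this remainder tends to zero in probability.
-/

open MeasureTheory ProbabilityTheory Filter Finset Topology

theorem Finset.prod_Icc_sub_natCast_eq_prod_range {M : Type*} [CommMonoid M] (f : ℤ → M) (t : ℤ)
    (n : ℕ) :
    ∏ k ∈ Icc (t - n) t, f k = ∏ j ∈ range (n + 1), f (t - j) := by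
  induction n with
  | zero => simp
  | succ n ih =>
    have hIcc : Icc (t - (n + 1 : ℕ)) t = insert (t - (n + 1 : ℕ)) (Icc (t - n) t) := by
      ext k; simp only [mem_Icc, mem_insert]; omega
    rw [hIcc, prod_insert (by simp; omega), ih, prod_range_succ _ (n + 1), mul_comm]

theorem Finset.prod_Icc_sub_natCast_succ_eq_mul_prod {M : Type*} [CommMonoid M] (f : ℤ → M)
    (t : ℤ) (n : ℕ) :
    ∏ k ∈ Icc (t - (n + 1 : ℕ)) t, f k = f t * ∏ k ∈ Icc (t - 1 - n) (t - 1), f k := by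
  rw [prod_Icc_sub_natCast_eq_prod_range, prod_Icc_sub_natCast_eq_prod_range, prod_range_succ',
    mul_comm]
  simp only [CharP.cast_eq_zero, sub_zero, Nat.cast_add, Nat.cast_one, sub_add_eq_sub_sub_swap]

theorem Finset.prod_Icc_sub_natCast_succ_eq_prod_mul {M : Type*} [CommMonoid M] (f : ℤ → M)
    (t : ℤ) (n : ℕ) :
    ∏ k ∈ Icc (t - (n + 1 : ℕ)) t, f k = (∏ k ∈ Icc (t - n) t, f k) * f (t - 1 - n) := by
  rw [prod_Icc_sub_natCast_eq_prod_range, prod_Icc_sub_natCast_eq_prod_range, prod_range_succ]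
  congr 2
  push_cast
  ring

theorem tendsto_div_add_one_zero_of_tendsto_cesaro {x : ℕ → ℝ} {L : ℝ}
    (hx : Tendsto (fun n : ℕ => (∑ j ∈ range n, x j) / n) atTop (𝓝 L)) :
    Tendsto (fun n : ℕ => x n / (n + 1)) atTop (𝓝 0) := by
  have hsucc : Tendsto (fun n : ℕ => (∑ j ∈ range (n + 1), x j) / (n + 1)) atTop (𝓝 L) := by
    refine (hx.comp (tendsto_add_atTop_nat 1)).congr fun n => ?_
    simp
  have hprev : Tendsto (fun n : ℕ => (∑ j ∈ range n, x j) / n * (n / (n + 1))) atTop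
      (𝓝 (L * 1)) := hx.mul (tendsto_natCast_div_add_atTop 1)
  have hdiff := hsucc.sub hprev
  rw [mul_one, sub_self] at hdiff
  refine hdiff.congr' ?_
  filter_upwards [eventually_ne_atTop 0] with n hn
  rw [sum_range_succ]
  field_simp
  ring

theorem summable_of_eventually_log_le_mul {f : ℕ → ℝ} {c : ℝ} (hf : ∀ n, 0 < f n) (hc : c < 0)
    (h : ∀ᶠ n in atTop, Real.log (f n) ≤ c * n) : Summable f := by
  refine Summable.of_norm_bounded_eventually_nat
    (summable_geometric_of_lt_one (Real.exp_pos c).le (Real.exp_lt_one_iff.mpr hc)) ?_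
  filter_upwards [h] with n hn
  rw [Real.norm_of_nonneg (hf n).le, ← Real.exp_nat_mul, mul_comm, ← Real.exp_log (hf n)]
  exact Real.exp_le_exp.mpr hn

theorem tendsto_prod_range_zero_of_tendsto_cesaro_log {a : ℕ → ℝ} {L : ℝ} (ha : ∀ n, 0 < a n)
    (hL : L < 0)
    (hlog : Tendsto (fun n : ℕ => (∑ j ∈ range n, Real.log (a j)) / n) atTop (𝓝 L)) :
    Tendsto (fun n => ∏ j ∈ range n, a j) atTop (𝓝 0) := by
  have hlogprod : Tendsto (fun n => Real.log (∏ j ∈ range n, a j)) atTop atBot := by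
    refine (hlog.neg_mul_atTop hL tendsto_natCast_atTop_atTop).congr' ?_
    filter_upwards [eventually_ne_atTop 0] with n hn
    rw [Real.log_prod fun j _ => (ha j).ne']
    field_simp
  refine (Real.tendsto_exp_atBot.comp hlogprod).congr fun n => ?_
  exact Real.exp_log (prod_pos fun j _ => ha j)

theorem summable_prod_range_mul_of_tendsto_cesaro_log {a b : ℕ → ℝ} {L M : ℝ}
    (ha : ∀ n, 0 < a n) (hb : ∀ n, 0 < b n) (hL : L < 0)
    (hloga : Tendsto (fun n : ℕ => (∑ j ∈ range n, Real.log (a j)) / n) atTop (𝓝 L))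
    (hlogb : Tendsto (fun n : ℕ => (∑ j ∈ range n, max (Real.log (b j)) 0) / n) atTop (𝓝 M)) :
    Summable fun n => (∏ j ∈ range (n + 1), a j) * b n := by
  have hpos : ∀ n, 0 < (∏ j ∈ range (n + 1), a j) * b n :=
    fun n => mul_pos (prod_pos fun j _ => ha j) (hb n)
  have hbound : Tendsto (fun n : ℕ =>
      (∑ j ∈ range (n + 1), Real.log (a j)) / (n + 1) + max (Real.log (b n)) 0 / (n + 1))
      atTop (𝓝 (L + 0)) :=
    ((hloga.comp (tendsto_add_atTop_nat 1)).congr fun n => by simp).add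
      (tendsto_div_add_one_zero_of_tendsto_cesaro hlogb)
  refine summable_of_eventually_log_le_mul hpos (by linarith : L / 2 < 0) ?_
  filter_upwards [hbound.eventually_lt_const (by linarith : L + 0 < L / 2)] with n hn
  have hn1 : (0 : ℝ) < n + 1 := by positivity
  rw [← add_div, div_lt_iff₀ hn1] at hn
  rw [Real.log_mul (prod_pos fun j _ => ha j).ne' (hb n).ne', Real.log_prod fun j _ => (ha j).ne']
  nlinarith [le_max_left (Real.log (b n)) 0]

/-- `sreTerm a b t m = a_t ⋯ a_{j+1} b_j` with `j = t - 1 - m`. -/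
noncomputable def sreTerm (a b : ℤ → ℝ) (t : ℤ) (m : ℕ) : ℝ :=
  (∏ k ∈ Icc (t - m) t, a k) * b (t - 1 - m)

noncomputable def sreSolution (a b : ℤ → ℝ) (t : ℤ) : ℝ :=
  b t + ∑' m : ℕ, sreTerm a b t m

theorem sreTerm_succ (a b : ℤ → ℝ) (t : ℤ) (m : ℕ) :
    sreTerm a b t (m + 1) = a t * sreTerm a b (t - 1) m := by
  rw [sreTerm, sreTerm, prod_Icc_sub_natCast_succ_eq_mul_prod, mul_assoc]
  congr 3
  push_cast
  ring

theorem sreSolution_eq_mul_add {a b : ℤ → ℝ} {t : ℤ} (h : Summable (sreTerm a b t)) :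
    sreSolution a b t = a t * sreSolution a b (t - 1) + b t := by
  rw [sreSolution, sreSolution, h.tsum_eq_zero_add, tsum_congr (sreTerm_succ a b t),
    tsum_mul_left, sreTerm]
  simp only [CharP.cast_eq_zero, sub_zero, Icc_self, prod_singleton]
  ring

theorem sreSolution_comp_add_right (a b : ℤ → ℝ) (s t : ℤ) :
    sreSolution (fun k => a (k + s)) (fun k => b (k + s)) t = sreSolution a b (t + s) := by
  refine congrArg₂ _ rfl (tsum_congr fun m => ?_)
  simp only [sreTerm, prod_Icc_sub_natCast_eq_prod_range, sub_add_eq_add_sub]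

theorem eq_sum_sreTerm_add_prod_mul {a b y : ℤ → ℝ} (hy : ∀ s, y s = a s * y (s - 1) + b s)
    (t : ℤ) (n : ℕ) :
    y t = b t + ∑ m ∈ range n, sreTerm a b t m + (∏ k ∈ Icc (t - n) t, a k) * y (t - 1 - n) := by
  induction n with
  | zero => rw [hy t]; simp [add_comm]
  | succ n ih =>
    rw [ih, hy (t - 1 - n), sum_range_succ, prod_Icc_sub_natCast_succ_eq_prod_mul, sreTerm]
    push_cast
    ring_nf

section Probability

variable {Ω : Type*} [MeasurableSpace Ω] {P : Measure Ω}

theorem strong_law_ae_real_comp_of_iIndepFun {ι E : Type*} [MeasurableSpace E] {Z : ι → Ω → E}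
    (hind : iIndepFun Z P) (hid : ∀ i j, IdentDistrib (Z i) (Z j) P P) {φ : E → ℝ}
    (hφ : Measurable φ) {e : ℕ → ι} (he : Function.Injective e) (i₀ : ι)
    (hint : Integrable (fun ω => φ (Z i₀ ω)) P) :
    ∀ᵐ ω ∂P, Tendsto (fun n : ℕ => (∑ j ∈ range n, φ (Z (e j) ω)) / n) atTop
      (𝓝 (∫ ω, φ (Z i₀ ω) ∂P)) := by
  have hid' : ∀ j, IdentDistrib (fun ω => φ (Z (e j) ω)) (fun ω => φ (Z i₀ ω)) P P :=
    fun j => (hid _ _).comp hφ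
  have hslln := strong_law_ae_real (fun j ω => φ (Z (e j) ω)) ((hid' 0).integrable_iff.mpr hint)
    (fun i j hij => (hind.indepFun (he.ne hij)).comp hφ hφ) fun j => (hid' j).trans (hid' 0).symm
  rwa [(hid' 0).integral_eq] at hslln

theorem iIndepFun.identDistrib_precomp {ι E : Type*} [MeasurableSpace E] {Z : ι → Ω → E}
    (hZ : ∀ i, Measurable (Z i)) (hind : iIndepFun Z P) {e : ι → ι} (he : Function.Injective e)
    (hid : ∀ i, IdentDistrib (Z (e i)) (Z i) P P) :
    IdentDistrib (fun ω i => Z i ω) (fun ω i => Z (e i) ω) P P where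
  aemeasurable_fst := (measurable_pi_lambda _ hZ).aemeasurable
  aemeasurable_snd := (measurable_pi_lambda _ fun i => hZ (e i)).aemeasurable
  map_eq := by
    rw [hind.map_fun_eq_infinitePi_map hZ,
      (hind.precomp he).map_fun_eq_infinitePi_map fun i => hZ (e i)]
    simp_rw [(hid _).map_eq]

theorem tendsto_measure_lt_abs_atTop [IsFiniteMeasure P] {f : Ω → ℝ} (hf : Measurable f) :
    Tendsto (fun M : ℝ => P {ω | M < |f ω|}) atTop (𝓝 0) := by
  have hlim := tendsto_measure_iInter_atTop (μ := P) (s := fun M : ℝ => {ω | M < |f ω|})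
    (fun M => (measurableSet_lt measurable_const hf.abs).nullMeasurableSet)
    (fun M M' hM ω hω => hM.trans_lt hω) ⟨0, measure_ne_top P _⟩
  have hempty : ⋂ M : ℝ, {ω | M < |f ω|} = ∅ :=
    Set.eq_empty_of_forall_notMem fun ω hω => lt_irrefl |f ω| (Set.mem_iInter.1 hω |f ω|)
  rwa [hempty, measure_empty] at hlim

theorem TendstoInMeasure.mul_of_identDistrib [IsFiniteMeasure P] {Q Y : ℕ → Ω → ℝ}
    {Y₀ : Ω → ℝ} (hY₀ : Measurable Y₀) (hQ : TendstoInMeasure P Q atTop 0)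
    (hY : ∀ n, IdentDistrib (Y n) Y₀ P P) :
    TendstoInMeasure P (fun n => Q n * Y n) atTop 0 := by
  rw [tendstoInMeasure_iff_norm] at hQ ⊢
  intro ε hε
  rw [ENNReal.tendsto_atTop_zero]
  intro δ hδ
  obtain ⟨M, hMtail, hM⟩ := (((tendsto_measure_lt_abs_atTop (P := P) hY₀).eventually
    (gt_mem_nhds (ENNReal.half_pos hδ.ne'))).and (eventually_gt_atTop 0)).exists
  obtain ⟨N, hN⟩ := eventually_atTop.1 ((hQ (ε / M) (div_pos hε hM)).eventually
    (gt_mem_nhds (ENNReal.half_pos hδ.ne')))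
  refine ⟨N, fun n hn => ?_⟩
  have hsub : {ω | ε ≤ ‖(Q n * Y n) ω - (0 : Ω → ℝ) ω‖}
      ⊆ {ω | ε / M ≤ ‖Q n ω - (0 : Ω → ℝ) ω‖} ∪ Y n ⁻¹' {y | M < |y|} := by
    intro ω hω
    by_contra hcon
    simp only [Set.mem_union, Set.mem_ofPred_eq, Set.mem_preimage, Pi.zero_apply, sub_zero,
      Real.norm_eq_abs, not_or, not_le, not_lt] at hω hcon
    have : |Q n ω| * |Y n ω| < ε := calc
      |Q n ω| * |Y n ω| ≤ |Q n ω| * M := mul_le_mul_of_nonneg_left hcon.2 (abs_nonneg _)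
      _ < ε / M * M := mul_lt_mul_of_pos_right hcon.1 hM
      _ = ε := div_mul_cancel₀ ε hM.ne'
    rw [Pi.mul_apply, abs_mul] at hω
    linarith
  calc P {ω | ε ≤ ‖(Q n * Y n) ω - (0 : Ω → ℝ) ω‖}
      ≤ P {ω | ε / M ≤ ‖Q n ω - (0 : Ω → ℝ) ω‖} + P (Y n ⁻¹' {y | M < |y|}) :=
        (measure_mono hsub).trans (measure_union_le _ _)
    _ ≤ δ / 2 + δ / 2 := by
        rw [(hY n).measure_mem_eq (measurableSet_lt measurable_const measurable_abs)]
        exact add_le_add (hN n hn).le hMtail.le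
    _ = δ := ENNReal.add_halves δ

section StochasticRecurrence

variable {A B : ℤ → Ω → ℝ}

theorem ae_tendsto_prod_Icc_zero (hApos : ∀ t ω, 0 < A t ω)
    (hiid : iIndepFun (fun t ω => (A t ω, B t ω)) P)
    (hid : ∀ s t : ℤ, IdentDistrib (fun ω => (A s ω, B s ω)) (fun ω => (A t ω, B t ω)) P P)
    (hlogA_int : Integrable (fun ω => Real.log (A 1 ω)) P)
    (hlogA : ∫ ω, Real.log (A 1 ω) ∂P < 0) (t : ℤ) :
    ∀ᵐ ω ∂P, Tendsto (fun n : ℕ => ∏ k ∈ Icc (t - n) t, A k ω) atTop (𝓝 0) := by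
  filter_upwards [strong_law_ae_real_comp_of_iIndepFun hiid hid (measurable_fst.log)
    (e := fun j : ℕ => t - j) (fun i j h => by simpa using h) 1 hlogA_int] with ω hω
  refine ((tendsto_prod_range_zero_of_tendsto_cesaro_log (fun j => hApos _ ω) hlogA hω).comp
    (tendsto_add_atTop_nat 1)).congr fun n => ?_
  exact (prod_Icc_sub_natCast_eq_prod_range (A · ω) t n).symm

theorem ae_summable_sreTerm (hpos : ∀ t ω, 0 < A t ω ∧ 0 < B t ω)
    (hiid : iIndepFun (fun t ω => (A t ω, B t ω)) P)
    (hid : ∀ s t : ℤ, IdentDistrib (fun ω => (A s ω, B s ω)) (fun ω => (A t ω, B t ω)) P P)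
    (hlogA_int : Integrable (fun ω => Real.log (A 1 ω)) P)
    (hlogA : ∫ ω, Real.log (A 1 ω) ∂P < 0)
    (hlogB : Integrable (fun ω => max (Real.log (B 1 ω)) 0) P) (t : ℤ) :
    ∀ᵐ ω ∂P, Summable (sreTerm (A · ω) (B · ω) t) := by
  filter_upwards [strong_law_ae_real_comp_of_iIndepFun hiid hid (measurable_fst.log)
      (e := fun j : ℕ => t - j) (fun i j h => by simpa using h) 1 hlogA_int,
    strong_law_ae_real_comp_of_iIndepFun hiid hid (measurable_snd.log.max measurable_const)
      (e := fun j : ℕ => t - 1 - j) (fun i j h => by simpa using h) 1 hlogB] with ω hA hB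
  refine (summable_prod_range_mul_of_tendsto_cesaro_log (fun j => (hpos _ ω).1)
    (fun j => (hpos _ ω).2) hlogA hA hB).congr fun m => ?_
  rw [sreTerm, prod_Icc_sub_natCast_eq_prod_range]

theorem identDistrib_sreSolution_shift (hmeas : ∀ t, Measurable fun ω => (A t ω, B t ω))
    (hiid : iIndepFun (fun t ω => (A t ω, B t ω)) P)
    (hid : ∀ s t : ℤ, IdentDistrib (fun ω => (A s ω, B s ω)) (fun ω => (A t ω, B t ω)) P P)
    (s : ℤ) :
    IdentDistrib (fun ω t => sreSolution (A · ω) (B · ω) t)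
      (fun ω t => sreSolution (A · ω) (B · ω) (t + s)) P P := by
  have hΦ : Measurable fun (c : ℤ → ℝ × ℝ) t =>
      sreSolution (fun k => (c k).1) (fun k => (c k).2) t := by
    refine measurable_pi_lambda _ fun t => ?_
    unfold sreSolution sreTerm
    fun_prop
  have := (iIndepFun.identDistrib_precomp hmeas hiid (add_left_injective s)
    fun t => hid (t + s) t).comp hΦ
  convert this using 1 <;> funext ω t
  · rfl
  · exact (sreSolution_comp_add_right (A · ω) (B · ω) s t).symm

theorem ae_eq_sreSolution_of_identDistrib [IsFiniteMeasure P] {Y : ℤ → Ω → ℝ}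
    (hA : ∀ t, Measurable (A t)) (hY : ∀ t, Measurable (Y t)) {t : ℤ}
    (hprod : ∀ᵐ ω ∂P, Tendsto (fun n : ℕ => ∏ k ∈ Icc (t - n) t, A k ω) atTop (𝓝 0))
    (hsum : ∀ᵐ ω ∂P, Summable (sreTerm (A · ω) (B · ω) t))
    (hrec : ∀ s, ∀ᵐ ω ∂P, Y s ω = A s ω * Y (s - 1) ω + B s ω)
    (hYid : ∀ s, IdentDistrib (Y s) (Y (t - 1)) P P) :
    Y t =ᵐ[P] fun ω => sreSolution (A · ω) (B · ω) t := by
  have hQ : ∀ n : ℕ, Measurable fun ω => ∏ k ∈ Icc (t - n) t, A k ω :=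
    fun n => measurable_prod _ fun k _ => hA k
  set R : ℕ → Ω → ℝ := fun n ω => (∏ k ∈ Icc (t - n) t, A k ω) * Y (t - 1 - n) ω
  have hR_ae : ∀ᵐ ω ∂P, Tendsto (R · ω) atTop (𝓝 (Y t ω - sreSolution (A · ω) (B · ω) t)) := by
    filter_upwards [ae_all_iff.2 hrec, hsum] with ω hω hs
    rw [sreSolution, ← sub_sub]
    refine (tendsto_const_nhds.sub hs.hasSum.tendsto_sum_nat).congr fun n => ?_
    linarith [eq_sum_sreTerm_add_prod_mul hω t n]
  have hR_zero : TendstoInMeasure P R atTop 0 :=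
    TendstoInMeasure.mul_of_identDistrib (hY (t - 1))
      (tendstoInMeasure_of_tendsto_ae (fun n => (hQ n).aestronglyMeasurable) hprod) fun n => hYid _
  filter_upwards [tendstoInMeasure_ae_unique
    (tendstoInMeasure_of_tendsto_ae (fun n => ((hQ n).mul (hY _)).aestronglyMeasurable) hR_ae)
    hR_zero] with ω hω
  simpa [sub_eq_zero] using hω

end StochasticRecurrence

end Probability

/-- For an i.i.d. sequence `(A_t, B_t)_{t∈ℤ}` of positive random pairs with `E log A₁ < 0` and
`E log⁺ B₁ < ∞`, the stochastic recurrence equation `X_t = A_t X_{t−1} + B_t` has a unique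
stationary solution, given by `X_t = B_t + ∑_{j=−∞}^{t−1} A_t ⋯ A_{j+1} B_j` (indexed below by
`m = t − 1 − j ∈ ℕ`), the series converging almost surely. -/
theorem stmt7 {Ω : Type*} [MeasurableSpace Ω] (P : Measure Ω) [IsProbabilityMeasure P]
    (A B : ℤ → Ω → ℝ)
    (hmeas : ∀ t, Measurable fun ω => (A t ω, B t ω))
    (hpos : ∀ t ω, 0 < A t ω ∧ 0 < B t ω)
    (hiid : iIndepFun (m := fun _ : ℤ => (inferInstance : MeasurableSpace (ℝ × ℝ)))
      (fun t ω => (A t ω, B t ω)) P)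
    (hid : ∀ s t : ℤ, IdentDistrib (fun ω => (A s ω, B s ω)) (fun ω => (A t ω, B t ω)) P P)
    (hlogA_int : Integrable (fun ω => Real.log (A 1 ω)) P)
    (hlogA : (∫ ω, Real.log (A 1 ω) ∂P) < 0)
    (hlogB : Integrable (fun ω => max (Real.log (B 1 ω)) 0) P) :
    -- almost sure convergence of the series
    (∀ t : ℤ, ∀ᵐ ω ∂P,
      Summable fun m : ℕ =>
        (∏ k ∈ Finset.Icc (t - (m : ℤ)) t, A k ω) * B (t - 1 - (m : ℤ)) ω) ∧
    -- the series solves the stochastic recurrence equation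
    (∀ t : ℤ, ∀ᵐ ω ∂P,
      (B t ω + ∑' m : ℕ, (∏ k ∈ Finset.Icc (t - (m : ℤ)) t, A k ω) * B (t - 1 - (m : ℤ)) ω)
        = A t ω *
            (B (t - 1) ω +
              ∑' m : ℕ, (∏ k ∈ Finset.Icc (t - 1 - (m : ℤ)) (t - 1), A k ω) *
                B (t - 1 - 1 - (m : ℤ)) ω)
          + B t ω) ∧
    -- strict stationarity of the solution
    (∀ s : ℤ,
      IdentDistrib
        (fun ω (t : ℤ) =>
          B t ω + ∑' m : ℕ, (∏ k ∈ Finset.Icc (t - (m : ℤ)) t, A k ω) * B (t - 1 - (m : ℤ)) ω)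
        (fun ω (t : ℤ) =>
          B (t + s) ω + ∑' m : ℕ, (∏ k ∈ Finset.Icc (t + s - (m : ℤ)) (t + s), A k ω) *
            B (t + s - 1 - (m : ℤ)) ω)
        P P) ∧
    -- uniqueness: any stationary solution coincides with it almost surely
    (∀ Y : ℤ → Ω → ℝ, (∀ t, Measurable (Y t)) →
      (∀ t : ℤ, ∀ᵐ ω ∂P, Y t ω = A t ω * Y (t - 1) ω + B t ω) →
      (∀ s : ℤ,
        IdentDistrib (fun ω (t : ℤ) => (Y t ω, A t ω, B t ω))
          (fun ω (t : ℤ) => (Y (t + s) ω, A (t + s) ω, B (t + s) ω)) P P) →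
      ∀ t : ℤ,
        Y t =ᵐ[P] fun ω =>
          B t ω + ∑' m : ℕ, (∏ k ∈ Finset.Icc (t - (m : ℤ)) t, A k ω) * B (t - 1 - (m : ℤ)) ω) := by
  have hsum := ae_summable_sreTerm hpos hiid hid hlogA_int hlogA hlogB
  refine ⟨hsum, fun t => ?_, identDistrib_sreSolution_shift hmeas hiid hid, ?_⟩
  · filter_upwards [hsum t] with ω h
    exact sreSolution_eq_mul_add h
  · intro Y hY hrec hstat t
    have hYid : ∀ s, IdentDistrib (Y s) (Y (t - 1)) P P := fun s => by
      simpa [Function.comp_def] using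
        (hstat (t - 1 - s)).comp ((measurable_pi_apply s).fst)
    exact ae_eq_sreSolution_of_identDistrib (fun t => (hmeas t).fst) hY
      (ae_tendsto_prod_Icc_zero (fun t ω => (hpos t ω).1) hiid hid hlogA_int hlogA t) (hsum t)
      hrec hYid
end

section
/- (Glivenko–Cantelli theorem under bracketing entropy) Let F be a class of measurable functions on a probability space (X, A, P) such that the bracketing number N_{[ ]}(ε, F, L¹(P)) is finite for every ε > 0. Then F is P-Glivenko–Cantelli: sup_{f∈F} |P_n f − P f| → 0 almost surely, where P_n is the empirical measure of an i.i.d. sample from P. -/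
/-!
For a bracket `[l, u]` containing `f`, monotonicity of `Pₙ` and `P` gives
`|Pₙ f - P f| ≤ |Pₙ u - P u| + |Pₙ l - P l| + P (u - l)`. Fixing, for each `k`, a finite cover by
`1/(k+1)`-brackets, countably many endpoints are involved, so almost surely the strong law holds for
all of them at once; along such a sample the bound makes `sup_{f ∈ F} |Pₙ f - P f|` eventually
smaller than any `ε > 0`.
-/

open MeasureTheory Filter ProbabilityTheory Finset Topology

noncomputable section

theorem abs_sub_le_of_mem_Icc {a x b α y β : ℝ} (hx : x ∈ Set.Icc a b) (hy : y ∈ Set.Icc α β) :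
    |x - y| ≤ |b - β| + |a - α| + (β - α) := by
  obtain ⟨hax, hxb⟩ := hx
  obtain ⟨hαy, hyβ⟩ := hy
  rw [abs_le]
  constructor <;> linarith [le_abs_self (b - β), neg_abs_le (a - α), abs_nonneg (b - β),
    abs_nonneg (a - α)]

variable {𝒳 : Type*}

def empiricalMean (x : ℕ → 𝒳) (n : ℕ) (f : 𝒳 → ℝ) : ℝ :=
  (1 / (n : ℝ)) * ∑ i ∈ range n, f (x i)

theorem empiricalMean_mono (x : ℕ → 𝒳) (n : ℕ) {f g : 𝒳 → ℝ} (hfg : ∀ a, f a ≤ g a) :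
    empiricalMean x n f ≤ empiricalMean x n g :=
  mul_le_mul_of_nonneg_left (sum_le_sum fun i _ => hfg (x i)) (by positivity)

variable [MeasurableSpace 𝒳]

def IsBracketCover (μ : Measure 𝒳) (F : Set (𝒳 → ℝ)) (ε : ℝ) {N : ℕ} (l u : Fin N → 𝒳 → ℝ) :
    Prop :=
  (∀ i, Integrable (l i) μ ∧ Integrable (u i) μ) ∧
    (∀ i, (∫ a, (u i a - l i a) ∂μ) < ε) ∧
    (∀ f ∈ F, ∃ i, ∀ a, l i a ≤ f a ∧ f a ≤ u i a)

namespace IsBracketCover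

variable {μ : Measure 𝒳} {F : Set (𝒳 → ℝ)} {ε : ℝ} {N : ℕ} {l u : Fin N → 𝒳 → ℝ}

theorem mono (h : IsBracketCover μ F ε l u) {ε' : ℝ} (hε : ε ≤ ε') :
    IsBracketCover μ F ε' l u :=
  ⟨h.1, fun i => (h.2.1 i).trans_le hε, h.2.2⟩

theorem integrable_of_mem (h : IsBracketCover μ F ε l u) {f : 𝒳 → ℝ} (hf : f ∈ F)
    (hfm : Measurable f) : Integrable f μ := by
  obtain ⟨i, hi⟩ := h.2.2 f hf
  exact integrable_of_le_of_le hfm.aestronglyMeasurable (.of_forall fun a => (hi a).1)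
    (.of_forall fun a => (hi a).2) (h.1 i).1 (h.1 i).2

theorem eventually_abs_empiricalMean_sub_integral_lt (hB : IsBracketCover μ F ε l u)
    (hF : ∀ f ∈ F, Integrable f μ) (hε : 0 < ε) {x : ℕ → 𝒳}
    (hlim : ∀ i, Tendsto (fun n => empiricalMean x n (u i)) atTop (𝓝 (∫ a, u i a ∂μ)) ∧
      Tendsto (fun n => empiricalMean x n (l i)) atTop (𝓝 (∫ a, l i a ∂μ))) :
    ∀ᶠ n in atTop, ∀ f ∈ F, |empiricalMean x n f - ∫ a, f a ∂μ| < 2 * ε := by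
  obtain ⟨hint, hgap, hcov⟩ := hB
  have hclose : ∀ᶠ n in atTop, ∀ i,
      |empiricalMean x n (u i) - ∫ a, u i a ∂μ| < ε / 2 ∧
        |empiricalMean x n (l i) - ∫ a, l i a ∂μ| < ε / 2 := by
    simp only [← Real.dist_eq, eventually_all, eventually_and]
    exact fun i => ⟨Metric.tendsto_nhds.1 (hlim i).1 _ (half_pos hε),
      Metric.tendsto_nhds.1 (hlim i).2 _ (half_pos hε)⟩
  filter_upwards [hclose] with n hn f hf
  obtain ⟨i, hi⟩ := hcov f hf
  have hwidth : (∫ a, u i a ∂μ) - ∫ a, l i a ∂μ < ε := by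
    rw [← integral_sub (hint i).2 (hint i).1]
    exact hgap i
  calc |empiricalMean x n f - ∫ a, f a ∂μ|
      ≤ |empiricalMean x n (u i) - ∫ a, u i a ∂μ| + |empiricalMean x n (l i) - ∫ a, l i a ∂μ|
          + ((∫ a, u i a ∂μ) - ∫ a, l i a ∂μ) :=
        abs_sub_le_of_mem_Icc
          ⟨empiricalMean_mono x n fun a => (hi a).1, empiricalMean_mono x n fun a => (hi a).2⟩
          ⟨integral_mono (hint i).1 (hF f hf) fun a => (hi a).1,
            integral_mono (hF f hf) (hint i).2 fun a => (hi a).2⟩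
    _ < ε / 2 + ε / 2 + ε := by gcongr <;> linarith [(hn i).1, (hn i).2]
    _ = 2 * ε := by ring

end IsBracketCover

theorem tendsto_iSup_abs_empiricalMean_sub_integral {μ : Measure 𝒳} {F : Set (𝒳 → ℝ)}
    (hF : ∀ f ∈ F, Integrable f μ) {x : ℕ → 𝒳}
    (hB : ∀ ε : ℝ, 0 < ε → ∃ (N : ℕ) (l u : Fin N → 𝒳 → ℝ), IsBracketCover μ F ε l u ∧
      ∀ i, Tendsto (fun n => empiricalMean x n (u i)) atTop (𝓝 (∫ a, u i a ∂μ)) ∧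
        Tendsto (fun n => empiricalMean x n (l i)) atTop (𝓝 (∫ a, l i a ∂μ))) :
    Tendsto (fun n => ⨆ f : F, |empiricalMean x n f - ∫ a, (f : 𝒳 → ℝ) a ∂μ|) atTop (𝓝 0) := by
  refine tendsto_order.2 ⟨fun c hc => .of_forall fun n =>
    hc.trans_le (Real.iSup_nonneg fun _ => abs_nonneg _), fun c hc => ?_⟩
  obtain ⟨N, l, u, hcover, hlim⟩ := hB (c / 4) (by positivity)
  filter_upwards [hcover.eventually_abs_empiricalMean_sub_integral_lt hF (by positivity) hlim]
    with n hn
  calc (⨆ f : F, |empiricalMean x n f - ∫ a, (f : 𝒳 → ℝ) a ∂μ|) ≤ 2 * (c / 4) :=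
        Real.iSup_le (fun f => (hn f f.2).le) (by positivity)
    _ < c := by linarith

theorem ae_tendsto_empiricalMean {μ : Measure 𝒳} {Ω : Type*} [MeasurableSpace Ω]
    {P : Measure Ω} {X : ℕ → Ω → 𝒳} (hXmeas : ∀ i, Measurable (X i)) (hindep : iIndepFun X P)
    (hlaw : ∀ i, P.map (X i) = μ) {g : 𝒳 → ℝ} (hg : Integrable g μ) :
    ∀ᵐ ω ∂P, Tendsto (fun n => empiricalMean (X · ω) n g) atTop (𝓝 (∫ a, g a ∂μ)) := by
  have hgX : ∀ i, AEMeasurable g (P.map (X i)) := fun i => (hlaw i).symm ▸ hg.aemeasurable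
  have hident : ∀ i, IdentDistrib (g ∘ X i) (g ∘ X 0) P P := fun i =>
    IdentDistrib.comp_of_aemeasurable
      ⟨(hXmeas i).aemeasurable, (hXmeas 0).aemeasurable, (hlaw i).trans (hlaw 0).symm⟩ (hgX i)
  have hindep' : Pairwise (Function.onFun (· ⟂ᵢ[P] ·) fun i => g ∘ X i) := fun i j hij =>
    (hindep.indepFun hij).comp₀ (hXmeas i).aemeasurable (hXmeas j).aemeasurable (hgX i) (hgX j)
  have hint : Integrable (g ∘ X 0) P :=
    ((hlaw 0).symm ▸ hg).comp_aemeasurable (hXmeas 0).aemeasurable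
  have hmean : P[g ∘ X 0] = ∫ a, g a ∂μ := by
    rw [← hlaw 0, integral_map (hXmeas 0).aemeasurable (hgX 0).aestronglyMeasurable]
    rfl
  filter_upwards [strong_law_ae_real (fun i => g ∘ X i) hint hindep' hident] with ω hω
  rw [← hmean]
  simpa only [empiricalMean, one_div_mul_eq_div, Function.comp_apply] using hω

end

theorem stmt18_general {𝒳 : Type*} [MeasurableSpace 𝒳] (μ : Measure 𝒳)
    (F : Set (𝒳 → ℝ))
    (hFmeas : ∀ f ∈ F, Measurable f)
    (hbracket : ∀ ε : ℝ, 0 < ε → ∃ (N : ℕ) (l u : Fin N → 𝒳 → ℝ),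
      (∀ i, Integrable (l i) μ ∧ Integrable (u i) μ) ∧
      (∀ i, (∫ a, (u i a - l i a) ∂μ) < ε) ∧
      (∀ f ∈ F, ∃ i, ∀ a, l i a ≤ f a ∧ f a ≤ u i a))
    {Ω : Type*} [MeasurableSpace Ω] (P : Measure Ω)
    (X : ℕ → Ω → 𝒳) (hXmeas : ∀ i, Measurable (X i))
    (hindep : ProbabilityTheory.iIndepFun
      X P)
    (hlaw : ∀ i, Measure.map (X i) P = μ) :
    ∀ᵐ ω ∂P,
      Filter.Tendsto
        (fun n : ℕ =>
          ⨆ f : F, |(1 / (n : ℝ)) * ∑ i ∈ Finset.range n, (f : 𝒳 → ℝ) (X i ω)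
            - ∫ a, (f : 𝒳 → ℝ) a ∂μ|)
        Filter.atTop (nhds 0) := by
  have hcovers : ∀ k : ℕ, ∃ (N : ℕ) (l u : Fin N → 𝒳 → ℝ),
      IsBracketCover μ F (1 / ((k : ℝ) + 1)) l u :=
    fun k => hbracket _ Nat.one_div_pos_of_nat
  choose N l u hB using hcovers
  have hFint : ∀ f ∈ F, Integrable f μ := fun f hf => (hB 0).integrable_of_mem hf (hFmeas f hf)
  have hslln : ∀ᵐ ω ∂P, ∀ k i,
      Tendsto (fun n => empiricalMean (X · ω) n (u k i)) atTop (𝓝 (∫ a, u k i a ∂μ)) ∧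
        Tendsto (fun n => empiricalMean (X · ω) n (l k i)) atTop (𝓝 (∫ a, l k i a ∂μ)) := by
    simp only [ae_all_iff, eventually_and]
    exact fun k i => ⟨ae_tendsto_empiricalMean hXmeas hindep hlaw ((hB k).1 i).2,
      ae_tendsto_empiricalMean hXmeas hindep hlaw ((hB k).1 i).1⟩
  filter_upwards [hslln] with ω hω
  refine tendsto_iSup_abs_empiricalMean_sub_integral hFint fun ε hε => ?_
  obtain ⟨k, hk⟩ := exists_nat_one_div_lt hε
  exact ⟨N k, l k, u k, (hB k).mono hk.le, hω k⟩

/-- Glivenko–Cantelli theorem under bracketing entropy: if a class `F` of measurable real-valued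
functions admits, for every `ε > 0`, a finite cover by `ε`-brackets in `L¹(μ)`, then for an
i.i.d. sample from `μ` the empirical process satisfies
`sup_{f∈F} |Pₙf − Pf| → 0` almost surely. -/
theorem stmt18 {𝒳 : Type*} [MeasurableSpace 𝒳] (μ : Measure 𝒳) [IsProbabilityMeasure μ]
    (F : Set (𝒳 → ℝ)) (hne : F.Nonempty)
    (hFmeas : ∀ f ∈ F, Measurable f)
    (hbracket : ∀ ε : ℝ, 0 < ε → ∃ (N : ℕ) (l u : Fin N → 𝒳 → ℝ),
      (∀ i, Integrable (l i) μ ∧ Integrable (u i) μ) ∧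
      (∀ i, (∫ a, (u i a - l i a) ∂μ) < ε) ∧
      (∀ f ∈ F, ∃ i, ∀ a, l i a ≤ f a ∧ f a ≤ u i a))
    {Ω : Type*} [MeasurableSpace Ω] (P : Measure Ω) [IsProbabilityMeasure P]
    (X : ℕ → Ω → 𝒳) (hXmeas : ∀ i, Measurable (X i))
    (hindep : ProbabilityTheory.iIndepFun
      X P)
    (hlaw : ∀ i, Measure.map (X i) P = μ) :
    ∀ᵐ ω ∂P,
      Filter.Tendsto
        (fun n : ℕ =>
          ⨆ f : F, |(1 / (n : ℝ)) * ∑ i ∈ Finset.range n, (f : 𝒳 → ℝ) (X i ω)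
            - ∫ a, (f : 𝒳 → ℝ) a ∂μ|)
        Filter.atTop (nhds 0) :=
  stmt18_general μ F hFmeas hbracket P X hXmeas hindep hlaw
end
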